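/- Let n ≥ 3 be odd and S ⊆ {1,…,n−1}. Then |hat{P}_D(S;n)| = Σ_{k=1}^{(n−1)/2} (|P(S;n)^{↗2k+1}| + |P(S;n)^{↗2k}|)·Φ(n−1, 2k) + |underline{P(S;n)}|·2^{n−1}, and |hat{P}_D(S∪{n};n)| = Σ_{k=1}^{(n−1)/2} (|P(S;n)^{↗2k+1}| + |P(S;n)^{↗2k}|)·Ψ(n−1, 2k). -/

import Mathlib

open Equiv

/-- Position `i` (1-based, with `1 < i < n`) is a peak of the permutation `π ∈ S_n`.
The value of `π` at 1-based position `j` is `π ⟨j - 1, _⟩`; values are 0-based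
(`π i = v` means the written value is `v + 1`). -/
def IsPeak {n : ℕ} (π : Equiv.Perm (Fin n)) (i : ℕ) : Prop :=
  ∃ h : 1 < i ∧ i < n,
    π ⟨i - 2, by omega⟩ < π ⟨i - 1, by omega⟩ ∧ π ⟨i, by omega⟩ < π ⟨i - 1, by omega⟩

/-- `P(S;n)`: permutations in `S_n` with peak set `S`. -/
def peakSetEq (n : ℕ) (S : Finset ℕ) : Set (Equiv.Perm (Fin n)) :=
  {π | ∀ i : ℕ, IsPeak π i ↔ i ∈ S}

/-- `π` ends with an ascent to `k`: `π_{n-1} < π_n` and `π_n = k` (values written `1..n`). -/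
def EndsAscentTo (n k : ℕ) (π : Equiv.Perm (Fin n)) : Prop :=
  ∃ h : 2 ≤ n, π ⟨n - 2, by omega⟩ < π ⟨n - 1, by omega⟩ ∧ ((π ⟨n - 1, by omega⟩ : ℕ) + 1 = k)

/-- `π` ends with a descent to `k`: `π_{n-1} > π_n` and `π_n = k`. -/
def EndsDescentTo (n k : ℕ) (π : Equiv.Perm (Fin n)) : Prop :=
  ∃ h : 2 ≤ n, π ⟨n - 1, by omega⟩ < π ⟨n - 2, by omega⟩ ∧ ((π ⟨n - 1, by omega⟩ : ℕ) + 1 = k)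

/-- `π` ends with an ascent: `π_{n-1} < π_n`. -/
def EndsAscent (n : ℕ) (π : Equiv.Perm (Fin n)) : Prop :=
  ∃ h : 2 ≤ n, π ⟨n - 2, by omega⟩ < π ⟨n - 1, by omega⟩

/-- `π` ends with a descent: `π_{n-1} > π_n`. -/
def EndsDescent (n : ℕ) (π : Equiv.Perm (Fin n)) : Prop :=
  ∃ h : 2 ≤ n, π ⟨n - 1, by omega⟩ < π ⟨n - 2, by omega⟩

/-- `P(S;n)^{↗k}` -/
def ascTo (n : ℕ) (S : Finset ℕ) (k : ℕ) : Set (Equiv.Perm (Fin n)) :=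
  {π ∈ peakSetEq n S | EndsAscentTo n k π}

/-- `P(S;n)_{↘k}` -/
def descTo (n : ℕ) (S : Finset ℕ) (k : ℕ) : Set (Equiv.Perm (Fin n)) :=
  {π ∈ peakSetEq n S | EndsDescentTo n k π}

/-- `overline{P(S;n)}`: elements of `P(S;n)` ending with an ascent. -/
def overlineP (n : ℕ) (S : Finset ℕ) : Set (Equiv.Perm (Fin n)) :=
  {π ∈ peakSetEq n S | EndsAscent n π}

/-- `underline{P(S;n)}`: elements of `P(S;n)` ending with a descent. -/
def underlineP (n : ℕ) (S : Finset ℕ) : Set (Equiv.Perm (Fin n)) :=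
  {π ∈ peakSetEq n S | EndsDescent n π}

/-- Type `C_n` mirrored permutations: `τ_{2n-i+1} = 2n - τ_i + 1` for all `1 ≤ i ≤ 2n`
(1-based); equivalently `τ (j.rev) = (τ j).rev` in 0-based `Fin (2*n)` terms. -/
def mirroredC (n : ℕ) : Set (Equiv.Perm (Fin (2 * n))) :=
  {τ | ∀ j, τ j.rev = (τ j).rev}

/-- Type `D_n` mirrored permutations: mirrored, and the first `n` positions carry an even
number of values from `{n+1, …, 2n}` (i.e. 0-based values `≥ n`). -/
def mirroredD (n : ℕ) : Set (Equiv.Perm (Fin (2 * n))) :=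
  {τ | (∀ j, τ j.rev = (τ j).rev) ∧
    Even ((Finset.univ.filter fun j : Fin (2 * n) => (j : ℕ) < n ∧ n ≤ (τ j : ℕ)).card)}

/-- The pattern bundle `𝒞_n(π)`: mirrored permutations whose first `n` entries have the
same relative order as `π`. -/
def bundleC (n : ℕ) (π : Equiv.Perm (Fin n)) : Set (Equiv.Perm (Fin (2 * n))) :=
  {τ ∈ mirroredC n | ∀ i j : Fin n,
    τ (Fin.castLE (by omega) i) < τ (Fin.castLE (by omega) j) ↔ π i < π j}

/-- The pattern bundle `𝒟_n(π)`. -/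
def bundleD (n : ℕ) (π : Equiv.Perm (Fin n)) : Set (Equiv.Perm (Fin (2 * n))) :=
  {τ ∈ mirroredD n | ∀ i j : Fin n,
    τ (Fin.castLE (by omega) i) < τ (Fin.castLE (by omega) j) ↔ π i < π j}

/-- Position `i` (1-based, `1 < i < n`) is a peak of the first `n` entries of `τ`. -/
def IsPeakFirst (n : ℕ) (τ : Equiv.Perm (Fin (2 * n))) (i : ℕ) : Prop :=
  ∃ h : 1 < i ∧ i < n,
    τ ⟨i - 2, by omega⟩ < τ ⟨i - 1, by omega⟩ ∧ τ ⟨i, by omega⟩ < τ ⟨i - 1, by omega⟩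

/-- `P_C(S;n)`: mirrored permutations of type `C_n` whose first `n` entries have peak set `S`. -/
def P_C (n : ℕ) (S : Finset ℕ) : Set (Equiv.Perm (Fin (2 * n))) :=
  {τ ∈ mirroredC n | ∀ i : ℕ, IsPeakFirst n τ i ↔ i ∈ S}

/-- `P_D(S;n)`. -/
def P_D (n : ℕ) (S : Finset ℕ) : Set (Equiv.Perm (Fin (2 * n))) :=
  {τ ∈ mirroredD n | ∀ i : ℕ, IsPeakFirst n τ i ↔ i ∈ S}

/-- Position `i` (1-based, `1 < i ≤ n`) is a peak of the first `n+1` entries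
`τ_1 ⋯ τ_n τ_{n+1}` of `τ` (so a peak at position `n` is possible). -/
def IsPeakHat (n : ℕ) (τ : Equiv.Perm (Fin (2 * n))) (i : ℕ) : Prop :=
  ∃ h : 1 < i ∧ i ≤ n,
    τ ⟨i - 2, by omega⟩ < τ ⟨i - 1, by omega⟩ ∧ τ ⟨i, by omega⟩ < τ ⟨i - 1, by omega⟩

/-- `hat{P}_C(S;n)`: mirrored permutations of type `C_n` such that `τ_1 ⋯ τ_n τ_{n+1}`
has peak set `S`. -/
def hatPC (n : ℕ) (S : Finset ℕ) : Set (Equiv.Perm (Fin (2 * n))) :=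
  {τ ∈ mirroredC n | ∀ i : ℕ, IsPeakHat n τ i ↔ i ∈ S}

/-- `hat{P}_D(S;n)`. -/
def hatPD (n : ℕ) (S : Finset ℕ) : Set (Equiv.Perm (Fin (2 * n))) :=
  {τ ∈ mirroredD n | ∀ i : ℕ, IsPeakHat n τ i ↔ i ∈ S}

/-- `Φ(n,k) = Σ_{i=k}^n C(n,i)`. -/
def Phi (n k : ℕ) : ℕ := ∑ i ∈ Finset.Icc k n, n.choose i

/-- `Ψ(n,k) = 2^n - Φ(n,k)`. -/
def Psi (n k : ℕ) : ℕ := 2 ^ n - Phi n k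

/-- The group `ℬ_n` of signed permutations on `n` letters. -/
def SignedPerms (n : ℕ) : Set (Fin n → ℤ) :=
  {β | (∀ i, 1 ≤ |β i| ∧ |β i| ≤ (n : ℤ)) ∧ Function.Injective fun i => |β i|}

/-- Position `i` (`1 ≤ i ≤ n - 1`) is a peak of the sequence `0, β_1, …, β_n`. -/
def IsPeakB (n : ℕ) (β : Fin n → ℤ) (i : ℕ) : Prop :=
  ∃ h : 1 ≤ i ∧ i < n,
    (if hi : 2 ≤ i then β ⟨i - 2, by omega⟩ else 0) < β ⟨i - 1, by omega⟩ ∧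
      β ⟨i, by omega⟩ < β ⟨i - 1, by omega⟩

/-- `hat{P}_B(R;n)`: signed permutations such that `0, β_1, …, β_n` has peak set `R`. -/
def hatPB (n : ℕ) (R : Finset ℕ) : Set (Fin n → ℤ) :=
  {β ∈ SignedPerms n | ∀ i : ℕ, IsPeakB n β i ↔ i ∈ R}

/-!
A type `D_n` mirrored permutation `τ` is determined by `τ_1 ⋯ τ_n`, and these entries are
determined by their relative order `π ∈ S_n` together with the set `E` of pairs
`{c, 2n + 1 - c}` from which the larger value was taken; the type `D` condition says that
`|E|` is even. Since `τ_{n+1} = 2n + 1 - τ_n`, the peaks of `τ_1 ⋯ τ_{n+1}` are those of `π`,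
plus `n` exactly when `π` ends with an ascent to some `k` and `τ_n > n`, i.e. when
`|E| ≥ n + 1 - k`. By Pascal's rule the even subsets of `[n]` with `|E| ≤ n - k` are counted
by `Φ(n - 1, 2⌊k/2⌋)`, the others by `Ψ(n - 1, 2⌊k/2⌋)`, and all `2^(n-1)` even subsets count
when `π` ends with a descent.
-/

open Finset

theorem sum_range_choose_succ_two_mul (N a : ℕ) :
    ∑ i ∈ range (a + 1), (N + 1).choose (2 * i) = ∑ j ∈ range (2 * a + 1), N.choose j := by
  induction a with
  | zero => simp
  | succ a ih =>
    rw [sum_range_succ, ih, show 2 * (a + 1) = 2 * a + 1 + 1 by ring, Nat.choose_succ_succ']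
    simp only [sum_range_succ]
    ring

theorem card_even_card_le (N a : ℕ) :
    #{E : Finset (Fin (N + 1)) | Even #E ∧ #E ≤ 2 * a} =
      ∑ j ∈ range (2 * a + 1), N.choose j := by
  have hsplit : ({E : Finset (Fin (N + 1)) | Even #E ∧ #E ≤ 2 * a} : Finset _) =
      (range (a + 1)).biUnion fun i => powersetCard (2 * i) univ := by
    ext E
    simp only [mem_filter, mem_univ, true_and, mem_biUnion, mem_range, mem_powersetCard,
      subset_univ, Nat.even_iff]
    exact ⟨fun h => ⟨#E / 2, by omega, by omega⟩, fun ⟨i, hi, hE⟩ => by omega⟩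
  rw [hsplit, card_biUnion, ← sum_range_choose_succ_two_mul]
  · simp [card_powersetCard]
  · intro i _ j _ hij
    simp only [Function.onFun, disjoint_left, mem_powersetCard]
    omega

theorem Phi_eq_sum_range (N k : ℕ) : Phi N k = ∑ j ∈ range (N + 1 - k), N.choose j := by
  refine sum_nbij' (fun i => N - i) (fun j => N - j) ?_ ?_ ?_ ?_ ?_ <;> intro i hi <;>
    simp only [mem_Icc, mem_range] at hi ⊢
  all_goals first | omega | exact (Nat.choose_symm hi.2).symm

theorem Phi_zero (N : ℕ) : Phi N 0 = 2 ^ N := by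
  rw [Phi_eq_sum_range, Nat.sub_zero, Nat.sum_range_choose]

theorem Psi_zero (N : ℕ) : Psi N 0 = 0 := by
  rw [Psi, Phi_zero, Nat.sub_self]

theorem card_even_add_card_le_eq_Phi (m v : ℕ) (hv : v ≤ 2 * m + 1) :
    #{E : Finset (Fin (2 * m + 1)) | Even #E ∧ v + #E ≤ 2 * m + 1} =
      Phi (2 * m) (2 * (v / 2)) := by
  have hle : ({E : Finset (Fin (2 * m + 1)) | Even #E ∧ v + #E ≤ 2 * m + 1} : Finset _) =
      ({E | Even #E ∧ #E ≤ 2 * (m - v / 2)} : Finset _) := by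
    ext E
    simp only [mem_filter, mem_univ, true_and, Nat.even_iff]
    have := card_le_univ E
    simp only [Fintype.card_fin] at this
    omega
  rw [hle, card_even_card_le, Phi_eq_sum_range]
  congr 2
  omega

theorem card_even_lt_add_card_eq_Psi (m v : ℕ) (hv : v ≤ 2 * m + 1) :
    #{E : Finset (Fin (2 * m + 1)) | Even #E ∧ 2 * m + 1 < v + #E} =
      Psi (2 * m) (2 * (v / 2)) := by
  have hall : #{E : Finset (Fin (2 * m + 1)) | Even #E} = 2 ^ (2 * m) := by
    rw [← Phi_zero, ← Nat.zero_div 2, ← card_even_add_card_le_eq_Phi m 0 (by omega)]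
    congr 1
    ext E
    simp only [mem_filter, mem_univ, true_and, zero_add, iff_self_and]
    exact fun _ => by simpa using card_le_univ E
  rw [Psi, ← hall, ← card_even_add_card_le_eq_Phi m v hv,
    ← card_filter_add_card_filter_not (s := {E : Finset (Fin (2 * m + 1)) | Even #E})
      (fun E => v + #E ≤ 2 * m + 1), filter_filter, filter_filter, Nat.add_sub_cancel_left]
  simp only [not_le]

theorem sum_range_mul_div_two {R : Type*} [CommSemiring R] (a F : ℕ → R) (m : ℕ) :
    ∑ v ∈ range (2 * m + 2), a v * F (v / 2) =
      (a 0 + a 1) * F 0 + ∑ k ∈ Icc 1 m, (a (2 * k + 1) + a (2 * k)) * F k := by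
  induction m with
  | zero => simp [sum_range_succ, add_mul]
  | succ m ih =>
    rw [show 2 * (m + 1) + 2 = 2 * m + 2 + 1 + 1 by ring, sum_range_succ, sum_range_succ, ih,
      sum_Icc_succ_top (by omega), show (2 * m + 2) / 2 = m + 1 by omega,
      show (2 * m + 2 + 1) / 2 = m + 1 by omega, show 2 * (m + 1) = 2 * m + 2 by ring]
    ring

theorem Finset.orderEmbOfFin_lt_iff {α : Type*} [LinearOrder α] {s : Finset α} {k : ℕ}
    (h : #s = k) (r : Fin k) (x : α) :
    s.orderEmbOfFin h r < x ↔ (r : ℕ) < #{v ∈ s | v < x} := by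
  constructor
  · intro hr
    have hmaps : Set.MapsTo (s.orderEmbOfFin h) (Iic r : Finset (Fin k))
        ({v ∈ s | v < x} : Finset α) := fun q hq =>
      mem_filter.mpr ⟨s.orderEmbOfFin_mem h q,
        ((s.orderEmbOfFin h).monotone (mem_Iic.mp (mem_coe.mp hq))).trans_lt hr⟩
    have := card_le_card_of_injOn _ hmaps (s.orderEmbOfFin h).injective.injOn
    rwa [Fin.card_Iic] at this
  · intro hr
    by_contra hx
    have hsub : {v ∈ s | v < x} ⊆ (Iio r).image (s.orderEmbOfFin h) := by
      intro v hv
      obtain ⟨hvs, hvx⟩ := mem_filter.mp hv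
      obtain ⟨q, rfl⟩ : v ∈ Set.range (s.orderEmbOfFin h) := by
        rwa [Finset.range_orderEmbOfFin]
      exact mem_image.mpr ⟨q, mem_Iio.mpr ((s.orderEmbOfFin h).lt_iff_lt.mp
        (lt_of_lt_of_le hvx (not_lt.mp hx))), rfl⟩
    have := (card_le_card hsub).trans card_image_le
    rw [Fin.card_Iio] at this
    omega

theorem card_filter_prod_fst_and {α β : Type*} [Fintype α] [Fintype β] (P : α → Prop)
    (Q : α → β → Prop) [DecidablePred P] [∀ a, DecidablePred (Q a)] :
    #{p : α × β | P p.1 ∧ Q p.1 p.2} = ∑ a with P a, #{b | Q a b} := by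
  rw [card_filter, Fintype.sum_prod_type, sum_filter]
  refine sum_congr rfl fun a _ => ?_
  split_ifs with ha
  · simp only [ha, true_and, card_filter]
  · simp [ha]

theorem sum_comp_eq_sum_range_card_fiber {α M : Type*} [AddCommMonoid M] (s : Finset α)
    (g : α → ℕ) (f : ℕ → M) {N : ℕ} (hg : ∀ a ∈ s, g a ≤ N) :
    ∑ a ∈ s, f (g a) = ∑ v ∈ range (N + 1), #{a ∈ s | g a = v} • f v := by
  rw [← sum_fiberwise_of_maps_to (t := range (N + 1)) (g := g)
    fun a ha => mem_range.mpr (Nat.lt_succ_of_le (hg a ha))]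
  refine sum_congr rfl fun v _ => ?_
  rw [← sum_const]
  exact sum_congr rfl fun a ha => by rw [(mem_filter.mp ha).2]

theorem peak_condition_iff {n : ℕ} {S S' : Finset ℕ} (hS : n ∉ S)
    (hS' : ∀ i ≠ n, i ∈ S' ↔ i ∈ S) (π : Perm (Fin n)) (A : Prop) :
    (∀ i, (IsPeak π i ∨ (i = n ∧ A)) ↔ i ∈ S') ↔ π ∈ peakSetEq n S ∧ (A ↔ n ∈ S') := by
  have hnot : ¬ IsPeak π n := fun ⟨⟨_, h⟩, _⟩ => lt_irrefl n h
  constructor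
  · intro h
    refine ⟨fun i => ?_, by simpa [hnot] using h n⟩
    by_cases hi : i = n
    · subst hi
      exact iff_of_false hnot hS
    · simpa [hi, hS' i hi] using h i
  · rintro ⟨hπ, hA⟩ i
    by_cases hi : i = n
    · subst hi
      simpa [hnot] using hA
    · simpa [hi, hS' i hi] using hπ i

open Classical in
/-- `0` encodes a final descent, so that `n + 1 ≤ ascentEnd π + m` fails then for `m ≤ n`. -/
noncomputable def ascentEnd {n : ℕ} (π : Perm (Fin n)) : ℕ :=
  if h : EndsAscent n π then (π ⟨n - 1, by obtain ⟨_, _⟩ := h; omega⟩ : ℕ) + 1 else 0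

section ascentEnd

variable {n : ℕ} (π : Perm (Fin n))

theorem ascentEnd_le : ascentEnd π ≤ n := by
  unfold ascentEnd
  split_ifs
  · exact Fin.is_lt _
  · exact Nat.zero_le n

theorem ascentEnd_ne_one : ascentEnd π ≠ 1 := by
  unfold ascentEnd
  split_ifs with h
  · obtain ⟨_, hlt⟩ := h
    have := Fin.lt_def.mp hlt
    omega
  · exact zero_ne_one

theorem ascentEnd_eq_iff {k : ℕ} (hk : k ≠ 0) : ascentEnd π = k ↔ EndsAscentTo n k π := by
  unfold ascentEnd EndsAscentTo
  split_ifs with h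
  · obtain ⟨h2, hlt⟩ := h
    exact ⟨fun hv => ⟨h2, hlt, hv⟩, fun ⟨_, _, hv⟩ => hv⟩
  · exact ⟨fun h0 => absurd h0.symm hk, fun ⟨h2, hlt, _⟩ => absurd ⟨h2, hlt⟩ h⟩

theorem ascentEnd_eq_zero_iff (hn : 2 ≤ n) : ascentEnd π = 0 ↔ EndsDescent n π := by
  unfold ascentEnd EndsDescent
  split_ifs with h
  · obtain ⟨h2, hlt⟩ := h
    exact ⟨fun h0 => h0.elim, fun ⟨_, hgt⟩ => absurd hlt hgt.asymm⟩
  · refine ⟨fun _ => ⟨hn, ?_⟩, fun _ => rfl⟩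
    have hne : π ⟨n - 1, by omega⟩ ≠ π ⟨n - 2, by omega⟩ := fun he => by
      have := congrArg Fin.val (π.injective he)
      simp only at this
      omega
    exact hne.lt_of_le (not_lt.mp fun hlt => h ⟨hn, hlt⟩)

theorem succ_le_ascentEnd_add_iff {m : ℕ} (hm : m ≤ n) :
    n + 1 ≤ ascentEnd π + m ↔
      ∃ h : 2 ≤ n, π ⟨n - 2, by omega⟩ < π ⟨n - 1, by omega⟩ ∧
        n ≤ (π ⟨n - 1, by omega⟩ : ℕ) + m := by
  unfold ascentEnd
  split_ifs with h
  · obtain ⟨h2, hlt⟩ := h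
    exact ⟨fun hle => ⟨h2, hlt, by omega⟩, fun ⟨_, _, hle⟩ => by omega⟩
  · exact ⟨fun hle => by omega, fun ⟨h2, hlt, _⟩ => absurd ⟨h2, hlt⟩ h⟩

end ascentEnd

section fibers

variable {n : ℕ} (S : Finset ℕ)

theorem sep_ascentEnd_eq_ascTo {k : ℕ} (hk : k ≠ 0) :
    {π ∈ peakSetEq n S | ascentEnd π = k} = ascTo n S k := by
  ext π
  exact and_congr_right fun _ => ascentEnd_eq_iff π hk

theorem sep_ascentEnd_eq_zero (hn : 2 ≤ n) :
    {π ∈ peakSetEq n S | ascentEnd π = 0} = underlineP n S := by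
  ext π
  exact and_congr_right fun _ => ascentEnd_eq_zero_iff π hn

theorem sep_ascentEnd_eq_one : {π ∈ peakSetEq n S | ascentEnd π = 1} = ∅ :=
  Set.eq_empty_of_forall_notMem fun π hπ => ascentEnd_ne_one π hπ.2

end fibers

namespace MirroredPerm

variable {n : ℕ}

theorem castLE_ne_rev_castLE (i j : Fin n) :
    Fin.castLE (by omega) i ≠ (Fin.castLE (by omega) j : Fin (2 * n)).rev := by
  intro h
  have := congrArg Fin.val h
  simp only [Fin.val_castLE, Fin.val_rev] at this
  omega

theorem exists_castLE_or_rev_castLE (j : Fin (2 * n)) :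
    ∃ i : Fin n,
      Fin.castLE (by omega) i = j ∨ (Fin.castLE (by omega) i : Fin (2 * n)).rev = j := by
  by_cases hj : (j : ℕ) < n
  · exact ⟨⟨j, hj⟩, Or.inl rfl⟩
  · refine ⟨⟨2 * n - 1 - j, by omega⟩, Or.inr (Fin.ext ?_)⟩
    simp only [Fin.val_castLE, Fin.val_rev]
    omega

theorem rev_lt_self_iff (w : Fin (2 * n)) : w.rev < w ↔ n ≤ (w : ℕ) := by
  rw [Fin.lt_def, Fin.val_rev]
  omega

theorem eq_of_mirrored {σ τ : Perm (Fin (2 * n))} (hσ : ∀ j, σ j.rev = (σ j).rev)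
    (hτ : ∀ j, τ j.rev = (τ j).rev)
    (h : ∀ i : Fin n, σ (Fin.castLE (by omega) i) = τ (Fin.castLE (by omega) i)) : σ = τ := by
  ext1 j
  obtain ⟨i, rfl | rfl⟩ := exists_castLE_or_rev_castLE j
  · exact h i
  · rw [hσ, hτ, h]

/-- The first half of a mirrored permutation holds one value of each pair `{c, c.rev}`;
`E` is the set of `c` whose larger value `c.rev` is taken. -/
def chosenValue (E : Finset (Fin n)) (c : Fin n) : Fin (2 * n) :=
  if c ∈ E then (Fin.castLE (by omega) c).rev else Fin.castLE (by omega) c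

theorem val_chosenValue (E : Finset (Fin n)) (c : Fin n) :
    (chosenValue E c : ℕ) = if c ∈ E then 2 * n - 1 - c else c := by
  unfold chosenValue
  split_ifs <;> simp only [Fin.val_rev, Fin.val_castLE]
  omega

theorem le_chosenValue_iff (E : Finset (Fin n)) (c : Fin n) :
    n ≤ (chosenValue E c : ℕ) ↔ c ∈ E := by
  rw [val_chosenValue]
  split_ifs with hc <;> simp only [hc, iff_true, iff_false] <;> omega

theorem chosenValue_injective (E : Finset (Fin n)) : Function.Injective (chosenValue E) := by
  intro c c' h
  have := congrArg Fin.val h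
  rw [val_chosenValue, val_chosenValue] at this
  split_ifs at this <;> omega

theorem chosenValue_ne_rev (E : Finset (Fin n)) (c c' : Fin n) :
    chosenValue E c ≠ (chosenValue E c').rev := by
  intro h
  have := congrArg Fin.val h
  rw [Fin.val_rev, val_chosenValue, val_chosenValue] at this
  have hc := c.isLt
  have hc' := c'.isLt
  split_ifs at this with h₁ h₂ h₂
  · omega
  · exact h₂ (Fin.ext (by omega : (c : ℕ) = c') ▸ h₁)
  · exact h₁ (Fin.ext (by omega : (c' : ℕ) = c) ▸ h₂)
  · omega

def valueSet (E : Finset (Fin n)) : Finset (Fin (2 * n)) := univ.image (chosenValue E)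

theorem card_valueSet (E : Finset (Fin n)) : #(valueSet E) = n := by
  rw [valueSet, card_image_of_injective _ (chosenValue_injective E), card_univ, Fintype.card_fin]

theorem rev_castLE_mem_valueSet_iff (E : Finset (Fin n)) (c : Fin n) :
    (Fin.castLE (by omega) c : Fin (2 * n)).rev ∈ valueSet E ↔ c ∈ E := by
  refine ⟨fun h => ?_, fun hc => mem_image.mpr ⟨c, mem_univ c, if_pos hc⟩⟩
  obtain ⟨c', -, h'⟩ := mem_image.mp h
  have := congrArg Fin.val h'
  rw [val_chosenValue, Fin.val_rev, Fin.val_castLE] at this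
  have hc := c.isLt
  have hc' := c'.isLt
  split_ifs at this with hc'E
  · exact Fin.ext (by omega : (c' : ℕ) = c) ▸ hc'E
  · omega

theorem card_filter_lt_valueSet (E : Finset (Fin n)) (hn : n < 2 * n) :
    #{v ∈ valueSet E | v < ⟨n, hn⟩} = n - #E := by
  rw [valueSet, filter_image, card_image_of_injective _ (chosenValue_injective E)]
  have : ({c | chosenValue E c < ⟨n, hn⟩} : Finset (Fin n)) = Eᶜ := by
    ext c
    rw [mem_filter, mem_compl, Fin.lt_def, ← not_le, le_chosenValue_iff]
    simp
  rw [this, card_compl, Fintype.card_fin]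

def prefixOf (π : Perm (Fin n)) (E : Finset (Fin n)) (i : Fin n) : Fin (2 * n) :=
  (valueSet E).orderEmbOfFin (card_valueSet E) (π i)

theorem prefixOf_lt_prefixOf_iff (π : Perm (Fin n)) (E : Finset (Fin n)) (i j : Fin n) :
    prefixOf π E i < prefixOf π E j ↔ π i < π j :=
  OrderEmbedding.lt_iff_lt _

theorem prefixOf_injective (π : Perm (Fin n)) (E : Finset (Fin n)) :
    Function.Injective (prefixOf π E) :=
  ((valueSet E).orderEmbOfFin (card_valueSet E)).injective.comp π.injective

theorem image_prefixOf (π : Perm (Fin n)) (E : Finset (Fin n)) :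
    univ.image (prefixOf π E) = valueSet E := by
  change univ.image ((valueSet E).orderEmbOfFin (card_valueSet E) ∘ π) = _
  rw [← image_image, image_univ_equiv, image_orderEmbOfFin_univ]

theorem prefixOf_ne_rev (π : Perm (Fin n)) (E : Finset (Fin n)) (i j : Fin n) :
    prefixOf π E i ≠ (prefixOf π E j).rev := by
  have hmem : ∀ i, prefixOf π E i ∈ valueSet E := fun i => orderEmbOfFin_mem _ _ _
  obtain ⟨c, -, hc⟩ := mem_image.mp (hmem i)
  obtain ⟨c', -, hc'⟩ := mem_image.mp (hmem j)
  rw [← hc, ← hc']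
  exact chosenValue_ne_rev E c c'

theorem le_prefixOf_iff (π : Perm (Fin n)) (E : Finset (Fin n)) (i : Fin n) :
    n ≤ (prefixOf π E i : ℕ) ↔ n ≤ (π i : ℕ) + #E := by
  have hn : n < 2 * n := by have := i.isLt; omega
  have hE : #E ≤ n := by simpa using card_le_univ E
  rw [← not_lt, ← not_lt, ← Fin.lt_def (b := ⟨n, hn⟩), prefixOf, orderEmbOfFin_lt_iff,
    card_filter_lt_valueSet]
  omega

theorem card_le_prefixOf (π : Perm (Fin n)) (E : Finset (Fin n)) :
    #{i | n ≤ (prefixOf π E i : ℕ)} = #E := by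
  rw [← card_image_of_injective _ (prefixOf_injective π E),
    ← filter_image (p := fun v : Fin (2 * n) => n ≤ (v : ℕ)), image_prefixOf,
    valueSet, filter_image, card_image_of_injective _ (chosenValue_injective E)]
  simp only [le_chosenValue_iff, filter_mem_eq_inter, univ_inter]

def mirrorExtend (f : Fin n → Fin (2 * n)) (j : Fin (2 * n)) : Fin (2 * n) :=
  if h : (j : ℕ) < n then f ⟨j, h⟩ else (f ⟨2 * n - 1 - j, by omega⟩).rev

theorem mirrorExtend_castLE (f : Fin n → Fin (2 * n)) (i : Fin n) :
    mirrorExtend f (Fin.castLE (by omega) i) = f i :=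
  dif_pos i.isLt

theorem mirrorExtend_rev_castLE (f : Fin n → Fin (2 * n)) (i : Fin n) :
    mirrorExtend f (Fin.castLE (by omega) i).rev = (f i).rev := by
  have hi := i.isLt
  rw [mirrorExtend, dif_neg (by simp only [Fin.val_rev, Fin.val_castLE]; omega)]
  congr 2
  ext
  simp only [Fin.val_rev, Fin.val_castLE]
  omega

theorem mirrorExtend_rev (f : Fin n → Fin (2 * n)) (j : Fin (2 * n)) :
    mirrorExtend f j.rev = (mirrorExtend f j).rev := by
  obtain ⟨i, rfl | rfl⟩ := exists_castLE_or_rev_castLE j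
  · rw [mirrorExtend_rev_castLE, mirrorExtend_castLE]
  · rw [Fin.rev_rev, mirrorExtend_rev_castLE, mirrorExtend_castLE, Fin.rev_rev]

theorem mirrorExtend_injective {f : Fin n → Fin (2 * n)} (hf : Function.Injective f)
    (hrev : ∀ i j, f i ≠ (f j).rev) : Function.Injective (mirrorExtend f) := by
  intro a b hab
  obtain ⟨i, rfl | rfl⟩ := exists_castLE_or_rev_castLE a <;>
    obtain ⟨j, rfl | rfl⟩ := exists_castLE_or_rev_castLE b <;>
    simp only [mirrorExtend_rev_castLE, mirrorExtend_castLE, Fin.rev_inj] at hab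
  · rw [hf hab]
  · exact absurd hab (hrev i j)
  · exact absurd hab.symm (hrev j i)
  · rw [hf hab]

noncomputable def mirroredOf (π : Perm (Fin n)) (E : Finset (Fin n)) : Perm (Fin (2 * n)) :=
  Equiv.ofBijective (mirrorExtend (prefixOf π E)) <| Finite.injective_iff_bijective.mp <|
    mirrorExtend_injective (prefixOf_injective π E) (prefixOf_ne_rev π E)

theorem mirroredOf_castLE (π : Perm (Fin n)) (E : Finset (Fin n)) (i : Fin n) :
    mirroredOf π E (Fin.castLE (by omega) i) = prefixOf π E i :=
  mirrorExtend_castLE _ i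

theorem mirroredOf_rev (π : Perm (Fin n)) (E : Finset (Fin n)) (j : Fin (2 * n)) :
    mirroredOf π E j.rev = (mirroredOf π E j).rev :=
  mirrorExtend_rev _ j

theorem card_large_mirroredOf (π : Perm (Fin n)) (E : Finset (Fin n)) :
    #{j : Fin (2 * n) | (j : ℕ) < n ∧ n ≤ (mirroredOf π E j : ℕ)} = #E := by
  have hfirst : ({j : Fin (2 * n) | (j : ℕ) < n ∧ n ≤ (mirroredOf π E j : ℕ)} : Finset _) =
      ({i | n ≤ (prefixOf π E i : ℕ)} : Finset (Fin n)).image (Fin.castLE (by omega)) := by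
    ext j
    simp only [mem_filter, mem_univ, true_and, mem_image]
    constructor
    · rintro ⟨hj, hle⟩
      exact ⟨⟨j, hj⟩, by rwa [← mirroredOf_castLE], rfl⟩
    · rintro ⟨i, hi, rfl⟩
      exact ⟨i.isLt, by rwa [mirroredOf_castLE]⟩
  rw [hfirst, card_image_of_injective _ (Fin.castLE_injective _), card_le_prefixOf]

theorem mirroredOf_injective :
    Function.Injective (Function.uncurry (mirroredOf (n := n))) := by
  rintro ⟨π, E⟩ ⟨π', E'⟩ h
  have hpre : ∀ i, prefixOf π E i = prefixOf π' E' i := fun i => by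
    rw [← mirroredOf_castLE, ← mirroredOf_castLE]
    exact congrFun (congrArg DFunLike.coe h) _
  have hV : valueSet E = valueSet E' := by
    rw [← image_prefixOf π E, ← image_prefixOf π' E', funext hpre]
  obtain rfl : E = E' := by
    ext c
    rw [← rev_castLE_mem_valueSet_iff, hV, rev_castLE_mem_valueSet_iff]
  exact Prod.ext (Equiv.ext fun i => ((valueSet E).orderEmbOfFin _).injective (hpre i)) rfl

theorem exists_mirroredOf {τ : Perm (Fin (2 * n))} (hτ : ∀ j, τ j.rev = (τ j).rev) :
    ∃ π E, mirroredOf π E = τ := by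
  classical
  let E : Finset (Fin n) :=
    {c | ∃ i : Fin n, τ (Fin.castLE (by omega) i) = (Fin.castLE (by omega) c).rev}
  have hmem : ∀ i : Fin n, τ (Fin.castLE (by omega) i) ∈ valueSet E := by
    intro i
    obtain ⟨c, hc | hc⟩ := exists_castLE_or_rev_castLE (τ (Fin.castLE (by omega) i))
    · have hcE : c ∉ E := by
        rintro hcE
        obtain ⟨i', hi'⟩ := (mem_filter.mp hcE).2
        rw [hc, ← hτ] at hi'
        exact castLE_ne_rev_castLE i' i (τ.injective hi')
      exact mem_image.mpr ⟨c, mem_univ c, by rw [chosenValue, if_neg hcE, hc]⟩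
    · exact mem_image.mpr ⟨c, mem_univ c, by
        rw [chosenValue, if_pos (mem_filter.mpr ⟨mem_univ c, i, hc.symm⟩), hc]⟩
  let e := (valueSet E).orderIsoOfFin (card_valueSet E)
  let g : Fin n → Fin n := fun i => e.symm ⟨_, hmem i⟩
  have hg : Function.Injective g := fun i j h => by
    have := congrArg Subtype.val (e.symm.injective h)
    exact Fin.castLE_injective _ (τ.injective this)
  refine ⟨Equiv.ofBijective g (Finite.injective_iff_bijective.mp hg), E,
    eq_of_mirrored (mirroredOf_rev _ _) hτ fun i => ?_⟩
  rw [mirroredOf_castLE, prefixOf, ← coe_orderIsoOfFin_apply]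
  exact congrArg Subtype.val (e.apply_symm_apply _)

theorem mirroredD_eq_image :
    mirroredD n = Function.uncurry mirroredOf '' {p | Even #p.2} := by
  ext τ
  constructor
  · rintro ⟨hτ, heven⟩
    obtain ⟨π, E, rfl⟩ := exists_mirroredOf hτ
    exact ⟨(π, E), by rwa [Set.mem_ofPred_eq, ← card_large_mirroredOf π E], rfl⟩
  · rintro ⟨⟨π, E⟩, heven, rfl⟩
    exact ⟨mirroredOf_rev π E, by rwa [Function.uncurry_apply_pair, card_large_mirroredOf]⟩

theorem mirroredOf_mk_lt_iff (π : Perm (Fin n)) (E : Finset (Fin n)) {a b : ℕ} (ha : a < n)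
    (hb : b < n) (ha' : a < 2 * n) (hb' : b < 2 * n) :
    mirroredOf π E ⟨a, ha'⟩ < mirroredOf π E ⟨b, hb'⟩ ↔ π ⟨a, ha⟩ < π ⟨b, hb⟩ := by
  change mirroredOf π E (Fin.castLE (by omega) ⟨a, ha⟩) <
    mirroredOf π E (Fin.castLE (by omega) ⟨b, hb⟩) ↔ _
  rw [mirroredOf_castLE, mirroredOf_castLE, prefixOf_lt_prefixOf_iff]

theorem mirroredOf_mk_self_lt_iff (π : Perm (Fin n)) (E : Finset (Fin n)) (hn : 0 < n)
    (h : n < 2 * n) (h' : n - 1 < 2 * n) :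
    mirroredOf π E ⟨n, h⟩ < mirroredOf π E ⟨n - 1, h'⟩ ↔
      n ≤ (π ⟨n - 1, by omega⟩ : ℕ) + #E := by
  have hrev : (⟨n, h⟩ : Fin (2 * n)) =
      (Fin.castLE (by omega) (⟨n - 1, by omega⟩ : Fin n) : Fin (2 * n)).rev := by
    ext
    simp only [Fin.val_rev, Fin.val_castLE]
    omega
  change _ < mirroredOf π E (Fin.castLE (by omega) (⟨n - 1, by omega⟩ : Fin n)) ↔ _
  rw [hrev, mirroredOf_rev, rev_lt_self_iff, mirroredOf_castLE, le_prefixOf_iff]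

theorem isPeakHat_mirroredOf_iff (π : Perm (Fin n)) (E : Finset (Fin n)) (i : ℕ) :
    IsPeakHat n (mirroredOf π E) i ↔ IsPeak π i ∨ (i = n ∧ n + 1 ≤ ascentEnd π + #E) := by
  have hE : #E ≤ n := by simpa using card_le_univ E
  constructor
  · rintro ⟨⟨h1, h2⟩, hl, hr⟩
    rcases h2.lt_or_eq with h2 | rfl
    · exact Or.inl ⟨⟨h1, h2⟩, (mirroredOf_mk_lt_iff π E _ _ _ _).mp hl,
        (mirroredOf_mk_lt_iff π E _ _ _ _).mp hr⟩
    · refine Or.inr ⟨rfl, (succ_le_ascentEnd_add_iff π hE).mpr ⟨by omega,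
        (mirroredOf_mk_lt_iff π E _ _ _ _).mp hl, ?_⟩⟩
      exact (mirroredOf_mk_self_lt_iff π E (by omega) _ _).mp hr
  · rintro (⟨⟨h1, h2⟩, hl, hr⟩ | ⟨rfl, h⟩)
    · exact ⟨⟨h1, h2.le⟩, (mirroredOf_mk_lt_iff π E _ _ _ _).mpr hl,
        (mirroredOf_mk_lt_iff π E _ _ _ _).mpr hr⟩
    · obtain ⟨h2, hl, hr⟩ := (succ_le_ascentEnd_add_iff π hE).mp h
      exact ⟨⟨by omega, le_rfl⟩, (mirroredOf_mk_lt_iff π E _ _ _ _).mpr hl,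
        (mirroredOf_mk_self_lt_iff π E (by omega) _ _).mpr hr⟩

theorem hatPD_eq_image (S' : Finset ℕ) :
    hatPD n S' = Function.uncurry mirroredOf '' {p | Even #p.2 ∧
      ∀ i, (IsPeak p.1 i ∨ (i = n ∧ n + 1 ≤ ascentEnd p.1 + #p.2)) ↔ i ∈ S'} := by
  ext τ
  constructor
  · rintro ⟨hτ, hpeak⟩
    rw [mirroredD_eq_image] at hτ
    obtain ⟨⟨π, E⟩, heven, rfl⟩ := hτ
    exact ⟨(π, E), ⟨heven, fun i => (isPeakHat_mirroredOf_iff π E i).symm.trans (hpeak i)⟩, rfl⟩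
  · rintro ⟨⟨π, E⟩, ⟨heven, hpeak⟩, rfl⟩
    refine ⟨mirroredD_eq_image ▸ ⟨(π, E), heven, rfl⟩, fun i => ?_⟩
    exact (isPeakHat_mirroredOf_iff π E i).trans (hpeak i)

theorem ncard_hatPD_eq_sum {S S' : Finset ℕ} (hS : n ∉ S) (hS' : ∀ i ≠ n, i ∈ S' ↔ i ∈ S) :
    (hatPD n S').ncard = ∑ v ∈ range (n + 1), {π ∈ peakSetEq n S | ascentEnd π = v}.ncard *
      #{E : Finset (Fin n) | Even #E ∧ (n + 1 ≤ v + #E ↔ n ∈ S')} := by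
  classical
  rw [hatPD_eq_image, Set.ncard_image_of_injective _ mirroredOf_injective,
    Set.ncard_eq_toFinset_card', Set.toFinset_ofPred,
    filter_congr fun p _ => by rw [peak_condition_iff hS hS', and_left_comm],
    card_filter_prod_fst_and (· ∈ peakSetEq n S)
      fun π E => Even #E ∧ (n + 1 ≤ ascentEnd π + #E ↔ n ∈ S')]
  refine (sum_comp_eq_sum_range_card_fiber _ ascentEnd
    (fun v => #{E : Finset (Fin n) | Even #E ∧ (n + 1 ≤ v + #E ↔ n ∈ S')})
    fun π _ => ascentEnd_le π).trans (sum_congr rfl fun v _ => ?_)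
  rw [smul_eq_mul, Set.ncard_eq_toFinset_card', Set.toFinset_ofPred, filter_filter]

end MirroredPerm

theorem ncard_hatPD_odd_eq {m : ℕ} (hm : 1 ≤ m) {S S' : Finset ℕ} (hS : 2 * m + 1 ∉ S)
    (hS' : ∀ i ≠ 2 * m + 1, i ∈ S' ↔ i ∈ S) (F : ℕ → ℕ)
    (hF : ∀ v ≤ 2 * m + 1, #{E : Finset (Fin (2 * m + 1)) |
      Even #E ∧ (2 * m + 1 + 1 ≤ v + #E ↔ 2 * m + 1 ∈ S')} = F (v / 2)) :
    (hatPD (2 * m + 1) S').ncard = (underlineP (2 * m + 1) S).ncard * F 0 +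
      ∑ k ∈ Icc 1 m, ((ascTo (2 * m + 1) S (2 * k + 1)).ncard +
        (ascTo (2 * m + 1) S (2 * k)).ncard) * F k := by
  rw [MirroredPerm.ncard_hatPD_eq_sum hS hS',
    sum_congr rfl fun v hv => by rw [hF v (Nat.lt_succ_iff.mp (mem_range.mp hv))],
    sum_range_mul_div_two, sep_ascentEnd_eq_zero S (by omega), sep_ascentEnd_eq_one,
    Set.ncard_empty, add_zero]
  congr 1
  refine sum_congr rfl fun k hk => ?_
  have hk : k ≠ 0 := by have := (mem_Icc.mp hk).1; omega
  rw [sep_ascentEnd_eq_ascTo S (by omega), sep_ascentEnd_eq_ascTo S (by omega)]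

theorem stmt16 (n : ℕ) (hn : 3 ≤ n) (hodd : Odd n)
    (S : Finset ℕ) (hS : ∀ x ∈ S, 0 < x ∧ x < n) :
    (hatPD n S).ncard =
      (∑ k ∈ Finset.Icc 1 ((n - 1) / 2),
        ((ascTo n S (2 * k + 1)).ncard + (ascTo n S (2 * k)).ncard) * Phi (n - 1) (2 * k))
        + (underlineP n S).ncard * 2 ^ (n - 1) ∧
    (hatPD n (insert n S)).ncard =
      ∑ k ∈ Finset.Icc 1 ((n - 1) / 2),
        ((ascTo n S (2 * k + 1)).ncard + (ascTo n S (2 * k)).ncard) * Psi (n - 1) (2 * k) := by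
  obtain ⟨m, rfl⟩ := hodd
  have hm : 1 ≤ m := by omega
  have hnS : 2 * m + 1 ∉ S := fun h => (hS _ h).2.false
  rw [show 2 * m + 1 - 1 = 2 * m by omega, show 2 * m / 2 = m by omega]
  constructor
  · rw [ncard_hatPD_odd_eq hm hnS (fun _ _ => Iff.rfl) (fun k => Phi (2 * m) (2 * k))
      fun v hv => by simpa [hnS] using card_even_add_card_le_eq_Phi m v hv,
      Phi_zero, add_comm]
  · rw [ncard_hatPD_odd_eq hm hnS (fun i hi => by simp [hi]) (fun k => Psi (2 * m) (2 * k))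
      fun v hv => by simpa using card_even_lt_add_card_eq_Psi m v hv,
      Psi_zero, mul_zero, zero_add]
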